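/- Let A, B ∈ M₅(ℝ) be defined in the standard basis e₁,…,e₅ by A = diag(−2,−1,−1,0,0) and B·e₁ = 2e₂, B·e₂ = e₄, B·e₃ = 2e₅, B·e₄ = B·e₅ = 0. Then the only 4-dimensional subspaces of ℝ⁵ invariant under both A and B are span(e₂,e₃,e₄,e₅) and span(e₁,e₂,e₄,e₅). -/

import Mathlib

open Matrix

/-- `A = diag(−2,−1,−1,0,0)`. -/
def Amat : Matrix (Fin 5) (Fin 5) ℝ := Matrix.diagonal ![-2, -1, -1, 0, 0]

/-- `B` with `B·e₁ = 2e₂`, `B·e₂ = e₄`, `B·e₃ = 2e₅`, `B·e₄ = B·e₅ = 0`. -/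
def Bmat : Matrix (Fin 5) (Fin 5) ℝ :=
  !![0, 0, 0, 0, 0;
     2, 0, 0, 0, 0;
     0, 0, 0, 0, 0;
     0, 1, 0, 0, 0;
     0, 0, 2, 0, 0]

/-! A hyperplane `ker φ` is invariant under an operator `L` exactly when `φ ∘ L = μ • φ`, i.e. when
the coefficient row `c` of `φ` is a left eigenvector, `c ᵥ* L = μ • c`. As `B` is nilpotent its only
eigenvalue is `0`, and `c ᵥ* B = 0` kills `c 1`, `c 3`, `c 4`. Since `A` is diagonal with different
entries `-2` and `-1` at positions `0` and `2`, a left eigenvector cannot have both `c 0` and `c 2`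
nonzero. So `φ` is a nonzero multiple of the coordinate `x 0` or of `x 2` (indices are 0-based:
`x 0` is the coefficient of `e₁`). -/

open LinearMap Module

section Hyperplane

variable {K V : Type*} [Field K] [AddCommGroup V] [Module K V]

theorem Submodule.exists_ker_eq_of_finrank_add_one [FiniteDimensional K V] (W : Submodule K V)
    (hW : finrank K W + 1 = finrank K V) : ∃ φ : V →ₗ[K] K, φ ≠ 0 ∧ ker φ = W := by
  have hlt : W < ⊤ := lt_top_iff_ne_top.2 fun h => by rw [h, finrank_top] at hW; omega
  obtain ⟨φ, hφ, hle⟩ := W.exists_le_ker_of_lt_top hlt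
  refine ⟨φ, hφ, (Submodule.eq_of_le_of_finrank_eq hle ?_).symm⟩
  have := Module.Dual.finrank_ker_add_one_of_ne_zero hφ
  omega

theorem LinearMap.exists_comp_eq_smul_of_mapsTo_ker (φ : V →ₗ[K] K) (f : V →ₗ[K] V)
    (hf : ∀ x ∈ ker φ, f x ∈ ker φ) : ∃ μ : K, φ ∘ₗ f = μ • φ := by
  have : ⨅ _ : Unit, ker φ ≤ ker (φ ∘ₗ f) := by simpa [SetLike.le_def] using hf
  simpa [Submodule.mem_span_singleton, eq_comm] using mem_span_of_iInf_ker_le_ker this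

theorem LinearMap.eq_zero_of_comp_eq_smul_of_isNilpotent {φ : V →ₗ[K] K} {f : V →ₗ[K] V}
    {μ : K} (hf : IsNilpotent f) (h : φ ∘ₗ f = μ • φ) (hφ : φ ≠ 0) : μ = 0 := by
  have hpow : ∀ n : ℕ, φ ∘ₗ (f ^ n) = μ ^ n • φ := by
    intro n
    induction n with
    | zero => rw [pow_zero, pow_zero, one_smul, Module.End.one_eq_id, comp_id]
    | succ n ih => rw [pow_succ, Module.End.mul_eq_comp, ← comp_assoc, ih, smul_comp, h,
        smul_smul, pow_succ]
  obtain ⟨n, hn⟩ := hf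
  have : μ ^ n • φ = 0 := by rw [← hpow, hn, comp_zero]
  exact pow_eq_zero_iff'.1 ((smul_eq_zero.1 this).resolve_right hφ) |>.1

end Hyperplane

section Coordinates

variable {R ι : Type*} [CommRing R] [Fintype ι] [DecidableEq ι]

theorem LinearMap.apply_eq_dotProduct (φ : (ι → R) →ₗ[R] R) (x : ι → R) :
    φ x = (fun i => φ (Pi.single i 1)) ⬝ᵥ x := by
  conv_lhs => rw [pi_eq_sum_univ' x, map_sum]
  simp [dotProduct, mul_comm]

theorem LinearMap.vecMul_eq_smul_of_comp_toLin'_eq_smul {φ : (ι → R) →ₗ[R] R}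
    {M : Matrix ι ι R} {μ : R} (h : φ ∘ₗ M.toLin' = μ • φ) :
    (fun i => φ (Pi.single i 1)) ᵥ* M = μ • fun i => φ (Pi.single i 1) := by
  ext j
  have := LinearMap.congr_fun h (Pi.single j 1)
  rwa [comp_apply, Matrix.toLin'_apply, φ.apply_eq_dotProduct, Matrix.dotProduct_mulVec,
    dotProduct_single_one] at this

theorem LinearMap.ker_eq_ker_proj_of_apply_single_eq_zero {K : Type*} [Field K]
    {φ : (ι → K) →ₗ[K] K} (hφ : φ ≠ 0) {i : ι} (h : ∀ j ≠ i, φ (Pi.single j 1) = 0) :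
    ker φ = ker (proj i) := by
  have hφi : φ = φ (Pi.single i 1) • proj i := by
    ext j
    by_cases hj : j = i
    · subst hj; simp
    · simp [h j hj, hj]
  have hi : φ (Pi.single i 1) ≠ 0 := fun h0 => hφ (by rw [hφi, h0, zero_smul])
  rw [hφi, ker_smul _ _ hi]

theorem LinearMap.ker_proj_eq_span_single (i : ι) :
    ker (proj i : (ι → R) →ₗ[R] R) = Submodule.span R ((fun j => Pi.single j 1) '' {i}ᶜ) := by
  refine le_antisymm (fun x hx => ?_) (Submodule.span_le.2 ?_)
  · rw [pi_eq_sum_univ' x]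
    refine Submodule.sum_mem _ fun j _ => ?_
    by_cases hj : j = i
    · subst hj; simp_all
    · exact Submodule.smul_mem _ _ (Submodule.subset_span ⟨j, hj, rfl⟩)
  · rintro _ ⟨j, hj, rfl⟩
    simp [Ne.symm hj]

end Coordinates

theorem Bmat_pow_three : Bmat ^ 3 = 0 := by
  ext i j
  fin_cases i <;> fin_cases j <;> simp [Bmat, pow_succ, Matrix.mul_apply, Fin.sum_univ_five]

theorem vecMul_Amat (c : Fin 5 → ℝ) : c ᵥ* Amat = ![-2 * c 0, -c 1, -c 2, 0, 0] := by
  ext j; fin_cases j <;> simp [Amat, Matrix.vecMul_diagonal, mul_comm]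

theorem vecMul_Bmat (c : Fin 5 → ℝ) : c ᵥ* Bmat = ![2 * c 1, c 3, 2 * c 4, 0, 0] := by
  ext j; fin_cases j <;> simp [Bmat, Matrix.vecMul, dotProduct, Fin.sum_univ_five, mul_comm]

theorem isNilpotent_toLin'_Bmat : IsNilpotent (toLin' Bmat) :=
  ⟨3, by rw [← Matrix.toLin'_pow, Bmat_pow_three, map_zero]⟩

theorem eq_zero_of_vecMul_Bmat_eq_zero {c : Fin 5 → ℝ} (h : c ᵥ* Bmat = 0) :
    c 1 = 0 ∧ c 3 = 0 ∧ c 4 = 0 := by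
  simpa [vecMul_Bmat, funext_iff, Fin.forall_fin_succ] using h

theorem mul_eq_zero_of_vecMul_Amat_eq_smul {c : Fin 5 → ℝ} {a : ℝ} (h : c ᵥ* Amat = a • c) :
    c 0 * c 2 = 0 := by
  have h0 : -2 * c 0 = a * c 0 := by simpa [vecMul_Amat] using congr_fun h 0
  have h2 : -c 2 = a * c 2 := by simpa [vecMul_Amat] using congr_fun h 2
  linear_combination c 0 * h2 - c 2 * h0

theorem invariant_hyperplanes_of_sol2 (W : Submodule ℝ (Fin 5 → ℝ))
    (hdim : Module.finrank ℝ W = 4)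
    (hA : ∀ x ∈ W, Amat.mulVec x ∈ W)
    (hB : ∀ x ∈ W, Bmat.mulVec x ∈ W) :
    W = Submodule.span ℝ {(Pi.single 1 1 : Fin 5 → ℝ), Pi.single 2 1,
          Pi.single 3 1, Pi.single 4 1} ∨
    W = Submodule.span ℝ {(Pi.single 0 1 : Fin 5 → ℝ), Pi.single 1 1,
          Pi.single 3 1, Pi.single 4 1} := by
  obtain ⟨φ, hφ, rfl⟩ := W.exists_ker_eq_of_finrank_add_one (by simp [hdim])
  obtain ⟨a, ha⟩ := φ.exists_comp_eq_smul_of_mapsTo_ker (toLin' Amat) (by simpa using hA)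
  obtain ⟨b, hb⟩ := φ.exists_comp_eq_smul_of_mapsTo_ker (toLin' Bmat) (by simpa using hB)
  obtain rfl : b = 0 := eq_zero_of_comp_eq_smul_of_isNilpotent isNilpotent_toLin'_Bmat hb hφ
  obtain ⟨h1, h3, h4⟩ := eq_zero_of_vecMul_Bmat_eq_zero
    (by simpa using vecMul_eq_smul_of_comp_toLin'_eq_smul hb)
  have h02 := mul_eq_zero_of_vecMul_Amat_eq_smul (vecMul_eq_smul_of_comp_toLin'_eq_smul ha)
  have hker (i : Fin 5) (hi : ∀ j ≠ i, φ (Pi.single j 1) = 0) :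
      ker φ = Submodule.span ℝ ((fun j => Pi.single j 1) '' {i}ᶜ) := by
    rw [ker_eq_ker_proj_of_apply_single_eq_zero hφ hi, ker_proj_eq_span_single]
  rcases mul_eq_zero.1 h02 with h0 | h2
  · right
    rw [hker 2 (by intro j hj; fin_cases j <;> simp_all)]
    congr 1; ext x; simp [Fin.exists_fin_succ, eq_comm]
  · left
    rw [hker 0 (by intro j hj; fin_cases j <;> simp_all)]
    congr 1; ext x; simp [Fin.exists_fin_succ, eq_comm]
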